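/- Let j_6(t) = (3t-1)^3(3t^3 - 3t^2 + 9t - 1)^3/((t-1)^3 t^6 (9t-1)) in Q(t), the j-invariant of the family E_6(t), and let Φ_3(X,Y) be the classical modular polynomial of level 3. Then Φ_3(j_6(t), j_6(1/(9t))) = 0 as an identity in Q(t); that is, the curves E_6(t) and E_6(1/(9t)) are 3-isogenous. -/

import Mathlib

/-!
Substituting `u = 1/(9t)` and multiplying numerator and denominator of `j₆(u)` by `3¹⁸ t¹²`
writes `j₆(1/(9t))` as a quotient of polynomials in `t`. Since `Φ₃` has degree 4 in each
variable, multiplying `Φ₃(A/C, B/D)` by `C⁴ D⁴` clears all denominators, and the claim becomes a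
polynomial identity in `t` (of degree 88), which holds over every commutative ring.
-/

open RatFunc

/-- The classical modular polynomial `Φ₃` of level 3, evaluated at a pair of elements
of a commutative ring. -/
def Phi3 {R : Type*} [CommRing R] (X Y : R) : R :=
  X ^ 4 + Y ^ 4 - X ^ 3 * Y ^ 3 + 2232 * (X ^ 3 * Y ^ 2 + X ^ 2 * Y ^ 3)
    - 1069956 * (X ^ 3 * Y + X * Y ^ 3) + 36864000 * (X ^ 3 + Y ^ 3)
    + 2587918086 * X ^ 2 * Y ^ 2 + 8900222976000 * (X ^ 2 * Y + X * Y ^ 2)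
    + 452984832000000 * (X ^ 2 + Y ^ 2) - 770845966336000000 * X * Y
    + 1855425871872000000000 * (X + Y)

/-- The j-invariant of the family `E₆(t)`, as a rational function of `t`. -/
noncomputable def j6 (t : RatFunc ℚ) : RatFunc ℚ :=
  (3 * t - 1) ^ 3 * (3 * t ^ 3 - 3 * t ^ 2 + 9 * t - 1) ^ 3 /
    ((t - 1) ^ 3 * t ^ 6 * (9 * t - 1))

/-- The bihomogenization of `Φ₃`: `Phi3Homogenized A B C D = C⁴ D⁴ Φ₃(A/C, B/D)`. -/
def Phi3Homogenized {R : Type*} [CommRing R] (A B C D : R) : R :=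
  A ^ 4 * D ^ 4 + B ^ 4 * C ^ 4 - A ^ 3 * B ^ 3 * C * D
    + 2232 * (A ^ 3 * B ^ 2 * C * D ^ 2 + A ^ 2 * B ^ 3 * C ^ 2 * D)
    - 1069956 * (A ^ 3 * B * C * D ^ 3 + A * B ^ 3 * C ^ 3 * D)
    + 36864000 * (A ^ 3 * C * D ^ 4 + B ^ 3 * C ^ 4 * D)
    + 2587918086 * A ^ 2 * B ^ 2 * C ^ 2 * D ^ 2
    + 8900222976000 * (A ^ 2 * B * C ^ 2 * D ^ 3 + A * B ^ 2 * C ^ 3 * D ^ 2)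
    + 452984832000000 * (A ^ 2 * C ^ 2 * D ^ 4 + B ^ 2 * C ^ 4 * D ^ 2)
    - 770845966336000000 * A * B * C ^ 3 * D ^ 3
    + 1855425871872000000000 * (A * C ^ 3 * D ^ 4 + B * C ^ 4 * D ^ 3)

theorem Phi3_div_div {K : Type*} [Field K] (A B : K) {C D : K} (hC : C ≠ 0) (hD : D ≠ 0) :
    Phi3 (A / C) (B / D) = Phi3Homogenized A B C D / (C ^ 4 * D ^ 4) := by
  rw [eq_div_iff (by positivity)]
  calc Phi3 (A / C) (B / D) * (C ^ 4 * D ^ 4)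
      = Phi3Homogenized (A / C * C) (B / D * D) C D := by rw [Phi3, Phi3Homogenized]; ring
    _ = Phi3Homogenized A B C D := by rw [div_mul_cancel₀ A hC, div_mul_cancel₀ B hD]

set_option maxHeartbeats 4000000 in
theorem Phi3Homogenized_E6_eq_zero {R : Type*} [CommRing R] (t : R) :
    Phi3Homogenized ((3 * t - 1) ^ 3 * (3 * t ^ 3 - 3 * t ^ 2 + 9 * t - 1) ^ 3)
      ((1 - 3 * t) ^ 3 * (1 - 9 * t + 243 * t ^ 2 - 243 * t ^ 3) ^ 3)
      ((t - 1) ^ 3 * t ^ 6 * (9 * t - 1))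
      (t ^ 2 * (1 - 9 * t) ^ 3 * (1 - t)) = 0 := by
  rw [Phi3Homogenized]
  ring

theorem j6_one_div_nine_mul {t : RatFunc ℚ} (ht : t ≠ 0) :
    j6 (1 / (9 * t)) = (1 - 3 * t) ^ 3 * (1 - 9 * t + 243 * t ^ 2 - 243 * t ^ 3) ^ 3 /
      (t ^ 2 * (1 - 9 * t) ^ 3 * (1 - t)) := by
  have hs : (3 ^ 18 * t ^ 12 : RatFunc ℚ) ≠ 0 := mul_ne_zero (by norm_num) (pow_ne_zero _ ht)
  rw [j6, ← mul_div_mul_right _ _ hs]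
  congr 1 <;> field_simp <;> ring

theorem Phi3_j6_j6_one_div_nine_mul {t : RatFunc ℚ} (h0 : t ≠ 0) (h1 : t ≠ 1) (h9 : 9 * t ≠ 1) :
    Phi3 (j6 t) (j6 (1 / (9 * t))) = 0 := by
  have hC : (t - 1) ^ 3 * t ^ 6 * (9 * t - 1) ≠ 0 := by
    simp [h0, sub_ne_zero.2 h1, sub_ne_zero.2 h9]
  have hD : t ^ 2 * (1 - 9 * t) ^ 3 * (1 - t) ≠ 0 := by
    simp [h0, sub_ne_zero.2 h1.symm, sub_ne_zero.2 h9.symm]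
  rw [j6_one_div_nine_mul h0, j6, Phi3_div_div _ _ hC hD, Phi3Homogenized_E6_eq_zero, zero_div]

theorem RatFunc.X_ne_algebraMap {K : Type*} [Field K] (a : K) :
    (X : RatFunc K) ≠ algebraMap K (RatFunc K) a :=
  fun h ↦ transcendental_X (h ▸ isAlgebraic_algebraMap a)

/-- `Φ₃(j₆(t), j₆(1/(9t))) = 0` as an identity in `ℚ(t)`: the curves `E₆(t)` and
`E₆(1/(9t))` are related by a cyclic 3-isogeny. -/
theorem E6_three_isogeny :
    Phi3 (j6 RatFunc.X) (j6 (1 / (9 * RatFunc.X))) = 0 := by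
  have h1 : (X : RatFunc ℚ) ≠ 1 := by simpa using X_ne_algebraMap (1 : ℚ)
  have h9 : 9 * (X : RatFunc ℚ) ≠ 1 := by
    intro h
    apply X_ne_algebraMap (1 / 9 : ℚ)
    rw [map_div₀, map_one, map_ofNat, ← h]
    field_simp
  exact Phi3_j6_j6_one_div_nine_mul X_ne_zero h1 h9
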